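/- Let 𝔖 be an almost-arithmetic cofinite G-semimatroid. Then for every molecule (R,F,T) of S_𝔖=(E_𝔖,𝒞̲,rk̲), m_𝔖(R)·m_𝔖(R∪F∪T) = m_𝔖(R∪T)·m_𝔖(R∪F). -/

import Mathlib

open scoped Classical Pointwise


/-- A finitary semimatroid on the ground set `S`: a nonempty, finite-dimensional
simplicial complex `C` of finite subsets of `S` (containing all singletons), together
with a rank function satisfying (R1)-(R3), (CR1), (CR2). -/
structure FinSemimatroid (S : Type*) [DecidableEq S] where
  C : Set (Finset S)
  rk : Finset S → ℕ
  nonempty : C.Nonempty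
  downClosed : ∀ ⦃X Y : Finset S⦄, X ∈ C → Y ⊆ X → Y ∈ C
  singleton_mem : ∀ x : S, ({x} : Finset S) ∈ C
  finDim : ∃ d : ℕ, ∀ X ∈ C, X.card ≤ d
  r1 : ∀ X ∈ C, rk X ≤ X.card
  r2 : ∀ ⦃X Y : Finset S⦄, X ∈ C → Y ∈ C → X ⊆ Y → rk X ≤ rk Y
  r3 : ∀ ⦃X Y : Finset S⦄, X ∈ C → Y ∈ C → X ∪ Y ∈ C →
    rk (X ∪ Y) + rk (X ∩ Y) ≤ rk X + rk Y
  cr1 : ∀ ⦃X Y : Finset S⦄, X ∈ C → Y ∈ C → rk X = rk (X ∩ Y) → X ∪ Y ∈ C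
  cr2 : ∀ ⦃X Y : Finset S⦄, X ∈ C → Y ∈ C → rk X < rk Y →
    ∃ y ∈ Y, y ∉ X ∧ insert y X ∈ C

namespace FinSemimatroid

variable {S : Type*} [DecidableEq S]

/-- The closure of a central set. -/
def cl (M : FinSemimatroid S) (X : Finset S) : Set S :=
  {y : S | insert y X ∈ M.C ∧ M.rk (insert y X) = M.rk X}

/-- A flat is a closed central set. -/
def IsFlat (M : FinSemimatroid S) (X : Finset S) : Prop :=
  X ∈ M.C ∧ M.cl X = (X : Set S)

/-- The poset of flats, ordered by inclusion. -/
abbrev Flats (M : FinSemimatroid S) : Type _ := {X : Finset S // M.IsFlat X}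

/-- A simple finitary semimatroid. -/
def Simple (M : FinSemimatroid S) : Prop :=
  (∀ x : S, M.rk {x} = 1) ∧
    ∀ x y : S, x ≠ y → ({x, y} : Finset S) ∈ M.C → M.rk {x, y} = 2

end FinSemimatroid

/-- A poset is chain-finite if all its chains are finite. -/
def ChainFinite (L : Type*) [PartialOrder L] : Prop :=
  ∀ c : Set L, IsChain (· ≤ ·) c → c.Finite

/-- An atom of a bounded-below poset: an element covering the minimum. -/
def PosetAtom {L : Type*} [PartialOrder L] (a : L) : Prop :=
  ∃ bot : L, IsBot bot ∧ bot ⋖ a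

/-- `L` (with rank function `rk`) is a finite geometric lattice (finite, bounded below,
a lattice, ranked by `rk`, atomic and semimodular) with at most `N` atoms. -/
def IsFinGeomLatticeAtMost (L : Type*) [PartialOrder L] (rk : L → ℕ) (N : ℕ) : Prop :=
  Finite L ∧
    ∃ bot : L, IsBot bot ∧
      (∀ x y : L, ∃ m : L, IsGLB {x, y} m) ∧
      (∀ x y : L, ∃ j : L, IsLUB {x, y} j) ∧
      (∀ x y : L, x ⋖ y → rk y = rk x + 1) ∧
      (∀ x : L, ∃ A : Set L, (∀ a ∈ A, bot ⋖ a) ∧ IsLUB A x) ∧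
      (∀ x y m j : L, IsGLB {x, y} m → IsLUB {x, y} j → rk j + rk m ≤ rk x + rk y) ∧
      Nat.card {a : L | bot ⋖ a} ≤ N
/-- A `G`-semimatroid: an action of `G` on a finitary semimatroid, preserving
centrality and rank. -/
structure GSemimatroid (G S : Type*) [Group G] [MulAction G S] [DecidableEq S]
    extends FinSemimatroid S where
  smul_mem : ∀ (g : G) ⦃X : Finset S⦄, X ∈ C → X.image (g • ·) ∈ C
  rk_smul : ∀ (g : G) ⦃X : Finset S⦄, X ∈ C → rk (X.image (g • ·)) = rk X

namespace GSemimatroid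

variable {G S : Type*} [Group G] [MulAction G S] [DecidableEq S]

/-- The set of orbits `E_𝔖 = S/G`. -/
abbrev E (G S : Type*) [Group G] [MulAction G S] : Type _ :=
  Quotient (MulAction.orbitRel G S)

/-- The orbit of a point. -/
def orbOf (G : Type*) {S : Type*} [Group G] [MulAction G S] (x : S) : E G S :=
  Quotient.mk (MulAction.orbitRel G S) x

/-- `X̲`: the set of orbits met by `X`. -/
def under (G : Type*) {S : Type*} [Group G] [MulAction G S] (X : Finset S) :
    Set (E G S) :=
  orbOf G '' (X : Set S)

variable (M : GSemimatroid G S)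

/-- `𝒞̲ = {X̲ : X ∈ 𝒞}`. -/
def CQ : Set (Set (E G S)) := {A | ∃ X ∈ M.C, under G X = A}

/-- `rk̲ A = max { rk X : X ∈ 𝒞, X̲ ⊆ A }`. -/
noncomputable def rkQ (A : Set (E G S)) : ℕ :=
  sSup {n : ℕ | ∃ X ∈ M.C, under G X ⊆ A ∧ M.rk X = n}

/-- `𝒞_A`: the central sets lying over `A`. -/
def CA (A : Set (E G S)) : Set (Finset S) := {X | X ∈ M.C ∧ under G X = A}

/-- The type of central sets. -/
abbrev Cen : Type _ := {X : Finset S // X ∈ M.C}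

/-- The `G`-orbit relation on central sets. -/
def cenRel (X Y : M.Cen) : Prop := ∃ g : G, X.1.image (g • ·) = Y.1

/-- The set `𝒞/G` of orbits of central sets. -/
def COrb : Type _ := Quot M.cenRel

/-- The action is cofinite if `𝒞/G` is finite. -/
def Cofinite : Prop := Finite M.COrb

/-- `m_𝔖(A) = |𝒞_A / G|`. -/
noncomputable def m (A : Set (E G S)) : ℕ :=
  Nat.card {O : M.COrb // ∃ X : M.Cen, under G X.1 = A ∧ Quot.mk M.cenRel X = O}

def WeaklyTranslative : Prop :=
  ∀ (g : G) (x : S), ({x, g • x} : Finset S) ∈ M.C →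
    M.rk {x, g • x} = M.rk ({x} : Finset S)

def Translative : Prop :=
  ∀ (g : G) (x : S), ({x, g • x} : Finset S) ∈ M.C → g • x = x

def Centered : Prop := ∃ X ∈ M.C, under G X = (Set.univ : Set (E G S))

def Normal (_M : GSemimatroid G S) : Prop :=
  ∀ x : S, Subgroup.Normal (MulAction.stabilizer G x)

def AlmostArithmetic : Prop := M.Translative ∧ M.Normal

/-- The action is arithmetic: almost-arithmetic, and for every central `X` the set
`W(X) ⊆ Γ^X` is a subgroup (expressed via representative families of group elements). -/
def Arithmetic : Prop :=
  M.AlmostArithmetic ∧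
    ∀ ⦃X : Finset S⦄, X ∈ M.C → ∀ γ δ : S → G,
      X.image (fun x => γ x • x) ∈ M.C → X.image (fun x => δ x • x) ∈ M.C →
        X.image (fun x => (γ x * δ x) • x) ∈ M.C ∧
          X.image (fun x => (γ x)⁻¹ • x) ∈ M.C

/-- Remove from `X` all elements of the orbit `a₀`. -/
noncomputable def strip (a₀ : E G S) (X : Finset S) : Finset S :=
  X.filter (fun x => orbOf G x ≠ a₀)

/-- The Tutte polynomial of a `G`-semimatroid, as a function `ℤ × ℤ → ℤ`. -/
noncomputable def Tutte (x y : ℤ) : ℤ :=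
  ∑ᶠ A ∈ M.CQ, (M.m A : ℤ) * (x - 1) ^ (M.rkQ Set.univ - M.rkQ A) *
    (y - 1) ^ (Nat.card A - M.rkQ A)

end GSemimatroid

open GSemimatroid

/-! For `R ⊆ A ⊆ R ∪ T`, a central set over `A ∪ F` is the same thing as a central set `W` over
`A` together with a transversal of the orbits in `F`: translativity makes every central set a
transversal, and since `F` is free over `A` any transversal of `F` can be glued onto `W`, one
point at a time, by the augmentation axiom. The stabilizer of every such `W` is the subgroup `N`
fixing the orbits in `R` pointwise: the points of `W` over `T` are determined by its part over
`R`, and normality spreads a fixed point over its whole orbit. Counting `G`-orbits of pairs then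
gives `m(A ∪ F) = m(A) · #(transversals of F / N)`, a factor independent of `A`; compare
`A = R` with `A = R ∪ T`. -/

open MulAction

namespace MulAction

variable {G P Q : Type*} [Group G] [MulAction G P] [MulAction G Q]

theorem card_orbitRel_quotient_congr (e : P ≃ Q)
    (he : ∀ (g : G) (p : P), e (g • p) = g • e p) :
    Nat.card (orbitRel.Quotient G P) = Nat.card (orbitRel.Quotient G Q) :=
  Nat.card_congr <| Quotient.congr e fun p p' => by
    simp only [orbitRel_apply, mem_orbit_iff, ← he, e.apply_eq_iff_eq]

/-- An orbit of `G` on `P × Q` is an orbit `ω` of `P` together with an orbit of the common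
stabilizer `N` on `Q`, read off from the representative `(ω.out, q)`. -/
theorem card_orbitRel_quotient_prod (N : Subgroup G) (hN : ∀ p : P, stabilizer G p = N) :
    Nat.card (orbitRel.Quotient G (P × Q)) =
      Nat.card (orbitRel.Quotient G P) * Nat.card (orbitRel.Quotient N Q) := by
  have hfix : ∀ (p : P) (g : G), g • p = p ↔ g ∈ N := fun p g => by
    rw [← hN p, mem_stabilizer_iff]
  let φ : orbitRel.Quotient G P × orbitRel.Quotient N Q → orbitRel.Quotient G (P × Q) :=
    fun x => Quotient.liftOn x.2 (fun q => Quotient.mk _ (x.1.out, q)) fun q q' hqq' => by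
      obtain ⟨n, rfl⟩ := hqq'
      exact Quotient.sound ⟨n, Prod.ext ((hfix _ n).2 n.2) rfl⟩
  rw [← Nat.card_prod]
  refine (Nat.card_congr (Equiv.ofBijective φ ⟨?_, ?_⟩)).symm
  · rintro ⟨ω, ⟨q⟩⟩ ⟨ω', ⟨q'⟩⟩ h
    obtain ⟨g, hg⟩ : ∃ g : G, g • (ω'.out, q') = (ω.out, q) := Quotient.exact h
    have hgω : g • ω'.out = ω.out := congrArg Prod.fst hg
    obtain rfl : ω = ω' := by
      rw [← ω.out_eq, ← ω'.out_eq, ← hgω]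
      exact Quotient.sound (mem_orbit _ g)
    exact Prod.ext rfl (Quotient.sound ⟨⟨g, (hfix _ g).1 hgω⟩, congrArg Prod.snd hg⟩)
  · rintro ⟨⟨p, q⟩⟩
    obtain ⟨g, hg⟩ := Quotient.mk_out (s := orbitRel G P) p
    refine ⟨(Quotient.mk _ p, Quotient.mk _ (g • q)), ?_⟩
    show Quotient.mk _ (_, _) = _
    rw [← hg]
    exact Quotient.sound ⟨g, rfl⟩

end MulAction

namespace GSemimatroid

variable {G S : Type*} [Group G] [MulAction G S]

theorem orbOf_smul (g : G) (x : S) : orbOf G (g • x) = orbOf G x :=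
  Quotient.sound ⟨g, rfl⟩

theorem orbOf_eq_orbOf_iff {x y : S} : orbOf G x = orbOf G y ↔ ∃ g : G, g • y = x :=
  Quotient.eq.trans mem_orbit_iff

theorem mem_under {X : Finset S} {a : E G S} : a ∈ under G X ↔ ∃ x ∈ X, orbOf G x = a := by
  simp [under]

theorem orbOf_mem_under {X : Finset S} {x : S} (hx : x ∈ X) : orbOf G x ∈ under G X :=
  mem_under.2 ⟨x, hx, rfl⟩

theorem under_filter (X : Finset S) (A : Set (E G S)) [DecidablePred (orbOf G · ∈ A)] :
    under G (X.filter (orbOf G · ∈ A)) = under G X ∩ A := by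
  ext a
  simp only [mem_under, Finset.mem_filter, Set.mem_inter_iff]
  grind

variable [DecidableEq S]

theorem under_union (X Y : Finset S) : under G (X ∪ Y) = under G X ∪ under G Y := by
  simp [under, Set.image_union]

theorem under_insert (x : S) (X : Finset S) :
    under G (insert x X) = insert (orbOf G x) (under G X) := by
  simp [under, Set.image_insert_eq]

theorem under_smul (g : G) (X : Finset S) : under G (g • X) = under G X := by
  simp [under, Finset.coe_smul_finset, ← Set.image_smul, Set.image_image, orbOf_smul]

theorem filter_smul (g : G) (X : Finset S) (A : Set (E G S)) [DecidablePred (orbOf G · ∈ A)] :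
    (g • X).filter (orbOf G · ∈ A) = g • X.filter (orbOf G · ∈ A) := by
  simp only [Finset.smul_finset_def, Finset.filter_image, orbOf_smul]

theorem injOn_orbOf_smul {V : Finset S} (hV : Set.InjOn (orbOf G) (V : Set S)) (g : G) :
    Set.InjOn (orbOf G) (↑(g • V) : Set S) := by
  intro x hx y hy hxy
  obtain ⟨x, hx', rfl⟩ := Finset.mem_smul_finset.1 hx
  obtain ⟨y, hy', rfl⟩ := Finset.mem_smul_finset.1 hy
  rw [orbOf_smul, orbOf_smul] at hxy
  rw [hV hx' hy' hxy]

theorem Normal.smul_eq_self_of_orbOf_eq {M : GSemimatroid G S} (hnorm : M.Normal) {g : G}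
    {w x : S} (hw : g • w = w) (hx : orbOf G x = orbOf G w) : g • x = x := by
  obtain ⟨h, rfl⟩ := orbOf_eq_orbOf_iff.1 hx
  have hconj : h⁻¹ * g * h ∈ stabilizer G w := by
    simpa using (hnorm w).conj_mem g (mem_stabilizer_iff.2 hw) h⁻¹
  rwa [mem_stabilizer_iff, mul_smul, mul_smul, inv_smul_eq_iff] at hconj

variable (M : GSemimatroid G S)

theorem mem_cl_of_mem {X : Finset S} {x : S} (hX : X ∈ M.C) (hx : x ∈ X) : x ∈ M.cl X :=
  ⟨by rwa [Finset.insert_eq_of_mem hx], by rw [Finset.insert_eq_of_mem hx]⟩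

theorem mem_CQ_of_subset {A B : Set (E G S)} (hB : B ∈ M.CQ) (hAB : A ⊆ B) : A ∈ M.CQ := by
  obtain ⟨X, hX, rfl⟩ := hB
  exact ⟨_, M.downClosed hX (Finset.filter_subset _ X),
    by rw [under_filter X A, Set.inter_eq_right.2 hAB]⟩

theorem rk_le_rkQ {X : Finset S} (hX : X ∈ M.C) {A : Set (E G S)} (h : under G X ⊆ A) :
    M.rk X ≤ M.rkQ A := by
  obtain ⟨d, hd⟩ := M.finDim
  refine le_csSup ⟨d, ?_⟩ ⟨X, hX, h, rfl⟩
  rintro n ⟨Y, hY, -, rfl⟩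
  exact (M.r1 Y hY).trans (hd Y hY)

/-- Take `X` of maximal cardinality: if `rk X < rk Y`, (CR2) would augment it inside `U`. -/
theorem exists_mem_C_rk_le {X₀ U Y : Finset S} (hX₀ : X₀ ∈ M.C) (hX₀U : X₀ ⊆ U)
    (hY : Y ∈ M.C) (hU : ∀ X ∈ M.C, X₀ ⊆ X → ∀ y ∈ Y, insert y X ∈ M.C → y ∈ U) :
    ∃ X ∈ M.C, X₀ ⊆ X ∧ X ⊆ U ∧ M.rk Y ≤ M.rk X := by
  obtain ⟨X, hXmem, hXmax⟩ := Finset.exists_max_image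
    (U.powerset.filter fun X => X ∈ M.C ∧ X₀ ⊆ X) Finset.card
    ⟨X₀, Finset.mem_filter.2 ⟨Finset.mem_powerset.2 hX₀U, hX₀, subset_rfl⟩⟩
  obtain ⟨hXU, hX, hX₀X⟩ := Finset.mem_filter.1 hXmem
  refine ⟨X, hX, hX₀X, Finset.mem_powerset.1 hXU, not_lt.1 fun hlt => ?_⟩
  obtain ⟨y, hyY, hyX, hyXC⟩ := M.cr2 hX hY hlt
  have hbig := hXmax (insert y X) (Finset.mem_filter.2
    ⟨Finset.mem_powerset.2 (Finset.insert_subset (hU X hX hX₀X y hyY hyXC)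
      (Finset.mem_powerset.1 hXU)), hyXC, hX₀X.trans (Finset.subset_insert y X)⟩)
  rw [Finset.card_insert_of_notMem hyX] at hbig
  omega

/-- Submodularity on `X = {v} ∪ (W ∩ X)` gives `rk W ≤ rk (W ∩ X)`, and (CR1) glues `W` to
`X`. -/
theorem insert_mem_C_of_rk_lt {W X : Finset S} {v : S} (hW : W ∈ M.C) (hX : X ∈ M.C)
    (hvX : v ∈ X) (hXW : X ⊆ insert v W) (hrk : M.rk W < M.rk X) : insert v W ∈ M.C := by
  have hWX : W ∩ X ∈ M.C := M.downClosed hX Finset.inter_subset_right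
  have hsplit : {v} ∪ W ∩ X = X := by
    ext x
    simp only [Finset.mem_union, Finset.mem_singleton, Finset.mem_inter]
    have := @hXW x
    grind
  have h3 := M.r3 (M.singleton_mem v) hWX (by rwa [hsplit])
  rw [hsplit] at h3
  have h1 := M.r1 _ (M.singleton_mem v)
  have h2 := M.r2 hWX hW Finset.inter_subset_left
  rw [Finset.card_singleton] at h1
  have hunion := M.cr1 hW hX (by omega)
  rwa [show W ∪ X = insert v W by grind] at hunion

namespace Translative

variable {M}

theorem smul_eq_self (htl : M.Translative) {X : Finset S} (hX : X ∈ M.C) {x : S} {g : G}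
    (hx : x ∈ X) (hgx : g • x ∈ X) : g • x = x :=
  htl g x (M.downClosed hX (Finset.insert_subset hx (Finset.singleton_subset_iff.2 hgx)))

theorem injOn_orbOf (htl : M.Translative) {X : Finset S} (hX : X ∈ M.C) :
    Set.InjOn (orbOf G) (X : Set S) := by
  intro x hx y hy hxy
  obtain ⟨g, rfl⟩ := orbOf_eq_orbOf_iff.1 hxy.symm
  exact (htl.smul_eq_self hX hx hy).symm

theorem smul_eq_self_of_smul_finset_eq (htl : M.Translative) {X : Finset S} (hX : X ∈ M.C)
    {g : G} (hg : g • X = X) {x : S} (hx : x ∈ X) : g • x = x :=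
  htl.smul_eq_self hX hx (hg ▸ Finset.smul_mem_smul_finset hx)

/-- If `g` fixes `X` pointwise and `x ∈ cl X`, then `insert x X` and its translate by `g` meet
in a set of full rank, so (CR1) puts `x` and `g • x` in one central set. -/
theorem smul_eq_self_of_mem_cl (htl : M.Translative) {X : Finset S} {x : S} {g : G}
    (hg : ∀ y ∈ X, g • y = y) (hx : x ∈ M.cl X) : g • x = x := by
  obtain ⟨hxC, hxrk⟩ := hx
  have hgxC : g • insert x X ∈ M.C := M.smul_mem g hxC
  have hI : insert x X ∩ g • insert x X ∈ M.C := M.downClosed hxC Finset.inter_subset_left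
  have hXI : X ⊆ insert x X ∩ g • insert x X := fun y hy => Finset.mem_inter.2
    ⟨Finset.mem_insert_of_mem hy,
      hg y hy ▸ Finset.smul_mem_smul_finset (Finset.mem_insert_of_mem hy)⟩
  have hrkI : M.rk (insert x X) = M.rk (insert x X ∩ g • insert x X) :=
    le_antisymm (hxrk ▸ M.r2 (M.downClosed hxC (Finset.subset_insert x X)) hI hXI)
      (M.r2 hI hxC Finset.inter_subset_left)
  exact htl.smul_eq_self (M.cr1 hxC hgxC hrkI)
    (Finset.mem_union_left _ (Finset.mem_insert_self x X))
    (Finset.mem_union_right _ (Finset.smul_mem_smul_finset (Finset.mem_insert_self x X)))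

/-- A central set `Z` of larger rank over `under X` would, by (CR2), add to `X` a point from an
orbit already met by `X`. -/
theorem rkQ_under (htl : M.Translative) {X : Finset S} (hX : X ∈ M.C) :
    M.rkQ (under G X) = M.rk X := by
  refine le_antisymm (csSup_le ⟨M.rk X, X, hX, subset_rfl, rfl⟩ ?_) (M.rk_le_rkQ hX subset_rfl)
  rintro n ⟨Z, hZ, hZX, rfl⟩
  refine not_lt.1 fun hlt => ?_
  obtain ⟨z, hzZ, hzX, hzXC⟩ := M.cr2 hX hZ hlt
  obtain ⟨x, hx, hxz⟩ := mem_under.1 (hZX (orbOf_mem_under hzZ))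
  exact hzX (htl.injOn_orbOf hzXC (Finset.mem_insert_of_mem hx)
    (Finset.mem_insert_self z X) hxz ▸ hx)

/-- (CR2) against a central set over `insert (orbOf G v) (under G W)` adds to `W` some `z` in
the orbit of `v`; translativity keeps the augmentation of `{v}` against `insert z W` inside
`insert v W`. -/
theorem insert_mem_C (htl : M.Translative) {W : Finset S} {v : S} (hW : W ∈ M.C)
    (hCQ : insert (orbOf G v) (under G W) ∈ M.CQ)
    (hrk : M.rkQ (insert (orbOf G v) (under G W)) = M.rk W + 1) : insert v W ∈ M.C := by
  obtain ⟨Z, hZ, hZu⟩ := hCQ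
  obtain ⟨z, hzZ, hzW, hzWC⟩ := M.cr2 hW hZ (by rw [← htl.rkQ_under hZ, hZu, hrk]; omega)
  have hz : orbOf G z = orbOf G v := by
    rcases hZu ▸ orbOf_mem_under hzZ with h | h
    · exact h
    · obtain ⟨w, hw, hwz⟩ := mem_under.1 h
      exact absurd (htl.injOn_orbOf hzWC (Finset.mem_insert_of_mem hw)
        (Finset.mem_insert_self z W) hwz ▸ hw) hzW
  have hrkz : M.rk (insert z W) = M.rk W + 1 := by
    rw [← htl.rkQ_under hzWC, under_insert, hz, hrk]
  obtain ⟨X, hX, hvX, hXU, hrkX⟩ := M.exists_mem_C_rk_le (M.singleton_mem v)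
    (Finset.singleton_subset_iff.2 (Finset.mem_insert_self v W)) hzWC
    (fun X _ hvX y hy hyX => by
      rcases Finset.mem_insert.1 hy with rfl | hyW
      · rw [htl.injOn_orbOf hyX (Finset.mem_insert_self y X)
          (Finset.mem_insert_of_mem (Finset.singleton_subset_iff.1 hvX)) hz]
        exact Finset.mem_insert_self v W
      · exact Finset.mem_insert_of_mem hyW)
  exact M.insert_mem_C_of_rk_lt hW hX (Finset.singleton_subset_iff.1 hvX) hXU (by omega)

theorem union_mem_C (htl : M.Translative) {B : Set (E G S)} (hB : B ∈ M.CQ) {V W : Finset S}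
    (hV : Set.InjOn (orbOf G) (V : Set S)) (hW : W ∈ M.C)
    (hdisj : Disjoint (under G W) (under G V)) (hWB : under G W ∪ under G V ⊆ B)
    (hfree : ∀ A, under G W ⊆ A → A ⊆ under G W ∪ under G V → ∀ a ∈ under G V, a ∉ A →
      M.rkQ (insert a A) = M.rkQ A + 1) :
    W ∪ V ∈ M.C := by
  induction V using Finset.induction_on generalizing W with
  | empty => rwa [Finset.union_empty]
  | insert v V hvV ih =>
    rw [under_insert] at hdisj hWB hfree
    have hvW : orbOf G v ∉ under G W := (Set.disjoint_insert_right.1 hdisj).1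
    have hvV' : orbOf G v ∉ under G V := fun h => by
      obtain ⟨x, hx, hxv⟩ := mem_under.1 h
      exact hvV (hV (Finset.mem_insert_self v V) (Finset.mem_insert_of_mem hx) hxv.symm ▸ hx)
    have hWvB : insert (orbOf G v) (under G W) ∪ under G V ⊆ B := by
      rwa [Set.insert_union, ← Set.union_insert]
    have hvWC : insert v W ∈ M.C := htl.insert_mem_C hW
      (M.mem_CQ_of_subset hB (Set.subset_union_left.trans hWvB))
      (by rw [hfree _ subset_rfl Set.subset_union_left _ (Set.mem_insert _ _) hvW,
        htl.rkQ_under hW])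
    rw [Finset.union_insert, ← Finset.insert_union]
    refine ih (hV.mono (Finset.coe_subset.2 (Finset.subset_insert v V))) hvWC ?_ ?_ ?_
    · rw [under_insert, Set.disjoint_insert_left]
      exact ⟨hvV', (Set.disjoint_insert_right.1 hdisj).2⟩
    · rwa [under_insert]
    · rw [under_insert, Set.insert_union, ← Set.union_insert]
      intro A hWA hA a ha haA
      exact hfree A ((Set.subset_insert _ _).trans hWA) hA a (Set.mem_insert_of_mem _ ha) haA

end Translative

def centralOver (A : Set (E G S)) : SubMulAction G (Finset S) where
  carrier := M.CA A
  smul_mem' g X hX := ⟨M.smul_mem g hX.1, (under_smul g X).trans hX.2⟩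

variable (G) in
def transversals (A : Set (E G S)) : SubMulAction G (Finset S) where
  carrier := {V | under G V = A ∧ Set.InjOn (orbOf G) (V : Set S)}
  smul_mem' g V hV := ⟨(under_smul g V).trans hV.1, injOn_orbOf_smul hV.2 g⟩

theorem mem_transversals {A : Set (E G S)} {V : Finset S} :
    V ∈ transversals G A ↔ under G V = A ∧ Set.InjOn (orbOf G) (V : Set S) :=
  Iff.rfl

theorem m_eq_card_orbitRel_quotient (A : Set (E G S)) :
    M.m A = Nat.card (orbitRel.Quotient G (M.centralOver A)) := by
  let toOrbit : M.COrb → orbitRel.Quotient G (Finset S) :=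
    Quot.lift (fun X => Quotient.mk (orbitRel G (Finset S)) X.1) fun X Y h => by
      obtain ⟨g, hg⟩ := h
      exact (Quotient.sound (mem_orbit_iff.2 ⟨g, hg⟩)).symm
  symm
  refine Nat.card_congr (Equiv.ofBijective
    (fun X => Quotient.liftOn X (fun X => ⟨Quot.mk _ ⟨X.1, X.2.1⟩, ⟨X.1, X.2.1⟩, X.2.2, rfl⟩)
      fun X Y ⟨g, hg⟩ => Subtype.ext (Quot.sound ⟨g, congrArg Subtype.val hg⟩).symm) ⟨?_, ?_⟩)
  · rintro ⟨X⟩ ⟨Y⟩ h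
    obtain ⟨g, hg⟩ := Quotient.exact (congrArg (toOrbit ∘ Subtype.val) h)
    exact Quotient.sound ⟨g, Subtype.ext hg⟩
  · rintro ⟨_, X, hXu, rfl⟩
    exact ⟨Quotient.mk _ ⟨X.1, X.2, hXu⟩, rfl⟩

variable {M}

theorem mem_centralOver {A : Set (E G S)} {X : Finset S} :
    X ∈ M.centralOver A ↔ X ∈ M.C ∧ under G X = A :=
  Iff.rfl

theorem filter_mem_centralOver {A B : Set (E G S)} [DecidablePred (orbOf G · ∈ B)]
    {X : Finset S} (hX : X ∈ M.centralOver A) :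
    X.filter (orbOf G · ∈ B) ∈ M.centralOver (A ∩ B) :=
  ⟨M.downClosed hX.1 (Finset.filter_subset _ X), by rw [under_filter, hX.2]⟩

theorem Translative.filter_mem_transversals (htl : M.Translative) {A B : Set (E G S)}
    [DecidablePred (orbOf G · ∈ B)] {X : Finset S} (hX : X ∈ M.centralOver (A ∪ B)) :
    X.filter (orbOf G · ∈ B) ∈ transversals G B :=
  ⟨by rw [under_filter, hX.2, Set.union_inter_cancel_right],
    (htl.injOn_orbOf hX.1).mono (Finset.coe_subset.2 (Finset.filter_subset _ X))⟩

noncomputable def centralOverUnionEquiv (htl : M.Translative) {A F : Set (E G S)}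
    (hAF : Disjoint A F) (hext : ∀ W ∈ M.centralOver A, ∀ V ∈ transversals G F, W ∪ V ∈ M.C) :
    M.centralOver (A ∪ F) ≃ M.centralOver A × transversals G F where
  toFun X := (⟨_, Set.union_inter_cancel_left (s := A) (t := F) ▸ filter_mem_centralOver X.2⟩,
    ⟨_, htl.filter_mem_transversals X.2⟩)
  invFun p := ⟨p.1.1 ∪ p.2.1, hext _ p.1.2 _ p.2.2,
    by rw [under_union, (mem_centralOver.1 p.1.2).2, (mem_transversals.1 p.2.2).1]⟩
  left_inv X := Subtype.ext <| by
    show X.1.filter _ ∪ X.1.filter _ = X.1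
    rw [← Finset.filter_or]
    exact Finset.filter_true_of_mem fun x hx =>
      ((mem_centralOver.1 X.2).2 ▸ orbOf_mem_under hx :)
  right_inv p := by
    have hW : ∀ x ∈ p.1.1, orbOf G x ∈ A := fun x hx =>
      (mem_centralOver.1 p.1.2).2 ▸ orbOf_mem_under hx
    have hV : ∀ x ∈ p.2.1, orbOf G x ∈ F := fun x hx =>
      (mem_transversals.1 p.2.2).1 ▸ orbOf_mem_under hx
    refine Prod.ext (Subtype.ext ?_) (Subtype.ext ?_) <;>
      simp only [Finset.filter_union]
    · rw [Finset.filter_true_of_mem hW, Finset.filter_false_of_mem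
        fun x hx => hAF.notMem_of_mem_right (hV x hx), Finset.union_empty]
    · rw [Finset.filter_true_of_mem hV, Finset.filter_false_of_mem
        fun x hx => hAF.notMem_of_mem_left (hW x hx), Finset.empty_union]

theorem Translative.card_orbitRel_quotient_centralOver_union (htl : M.Translative)
    {A F : Set (E G S)} (hAF : Disjoint A F)
    (hext : ∀ W ∈ M.centralOver A, ∀ V ∈ transversals G F, W ∪ V ∈ M.C) :
    Nat.card (orbitRel.Quotient G (M.centralOver (A ∪ F))) =
      Nat.card (orbitRel.Quotient G (M.centralOver A × transversals G F)) :=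
  card_orbitRel_quotient_congr (centralOverUnionEquiv htl hAF hext) fun g X =>
    Prod.ext (Subtype.ext (filter_smul g X.1 A)) (Subtype.ext (filter_smul g X.1 F))

/-- `g` stabilizes `W` iff it fixes `W` pointwise (translativity), iff it fixes the part of `W`
over `R` pointwise (the rest lies in its closure), iff it fixes every orbit in `R` pointwise
(normality). -/
theorem stabilizer_eq_fixingSubgroup (htl : M.Translative) (hnorm : M.Normal)
    {R : Set (E G S)} [DecidablePred (orbOf G · ∈ R)] {W : Finset S} (hW : W ∈ M.C)
    (hR : R ⊆ under G W) (hcl : ↑W ⊆ M.cl (W.filter (orbOf G · ∈ R))) :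
    stabilizer G W = fixingSubgroup G (orbOf G ⁻¹' R) := by
  ext g
  rw [mem_stabilizer_iff, mem_fixingSubgroup_iff]
  constructor
  · intro hg x hx
    obtain ⟨w, hw, hwx⟩ := mem_under.1 (hR hx)
    exact hnorm.smul_eq_self_of_orbOf_eq (htl.smul_eq_self_of_smul_finset_eq hW hg hw) hwx.symm
  · intro hg
    have hfix : ∀ x ∈ W, g • x = x := fun x hx => by
      refine htl.smul_eq_self_of_mem_cl (fun y hy => ?_) (hcl hx)
      exact hg y (Finset.mem_filter.1 hy).2
    rw [Finset.smul_finset_def, Finset.image_congr hfix, Finset.image_id']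

variable (M) in
/-- `(R, F, T)` is a molecule of `S_𝔖 = (E_𝔖, 𝒞̲, rk̲)`. -/
structure IsMolecule (R F T : Finset (E G S)) : Prop where
  disjoint_RF : Disjoint R F
  disjoint_RT : Disjoint R T
  disjoint_FT : Disjoint F T
  union_mem_CQ : (↑(R ∪ F ∪ T) : Set (E G S)) ∈ M.CQ
  rkQ_eq : ∀ A : Finset (E G S), R ⊆ A → A ⊆ R ∪ F ∪ T → M.rkQ ↑A = M.rkQ ↑R + (A ∩ F).card

namespace IsMolecule

variable {R F T : Finset (E G S)}

theorem rkQ_insert_of_mem_F (hM : M.IsMolecule R F T) {A : Set (E G S)} (hRA : ↑R ⊆ A)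
    (hA : A ⊆ ↑(R ∪ F ∪ T)) {a : E G S} (ha : a ∈ F) (haA : a ∉ A) :
    M.rkQ (insert a A) = M.rkQ A + 1 := by
  obtain ⟨A, rfl⟩ := ((R ∪ F ∪ T).finite_toSet.subset hA).exists_finset_coe
  rw [Finset.coe_subset] at hRA hA
  rw [← Finset.coe_insert, hM.rkQ_eq _ (hRA.trans (Finset.subset_insert a A))
      (Finset.insert_subset (by simp [ha]) hA), hM.rkQ_eq _ hRA hA,
    Finset.insert_inter_of_mem ha,
    Finset.card_insert_of_notMem fun h => haA (Finset.mem_of_mem_inter_left h), add_assoc]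

theorem rkQ_insert_of_mem_T (hM : M.IsMolecule R F T) {t : E G S} (ht : t ∈ T) :
    M.rkQ (insert t ↑R) = M.rkQ ↑R := by
  rw [← Finset.coe_insert, hM.rkQ_eq _ (Finset.subset_insert t R) (Finset.insert_subset
      (by simp [ht]) (Finset.subset_union_left.trans Finset.subset_union_left)),
    Finset.insert_inter_of_notMem (Finset.disjoint_right.1 hM.disjoint_FT ht),
    Finset.disjoint_iff_inter_eq_empty.1 hM.disjoint_RF, Finset.card_empty, add_zero]

variable {A : Finset (E G S)}

theorem disjoint_F (hM : M.IsMolecule R F T) (hAT : A ⊆ R ∪ T) : Disjoint A F :=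
  Finset.disjoint_of_subset_left hAT
    (Finset.disjoint_union_left.2 ⟨hM.disjoint_RF, hM.disjoint_FT.symm⟩)

theorem union_mem_C (hM : M.IsMolecule R F T) (htl : M.Translative) (hRA : R ⊆ A)
    (hAT : A ⊆ R ∪ T) {W V : Finset S} (hW : W ∈ M.centralOver ↑A)
    (hV : V ∈ transversals G ↑F) : W ∪ V ∈ M.C := by
  obtain ⟨hWC, hWu⟩ := mem_centralOver.1 hW
  obtain ⟨hVu, hVinj⟩ := mem_transversals.1 hV
  have hAFB : (↑A : Set (E G S)) ∪ ↑F ⊆ ↑(R ∪ F ∪ T) := by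
    rw [← Finset.coe_union, Finset.coe_subset]
    intro x
    simp only [Finset.mem_union]
    have := @hAT x
    grind
  refine htl.union_mem_C hM.union_mem_CQ hVinj hWC
    (by rw [hWu, hVu, Finset.disjoint_coe]; exact hM.disjoint_F hAT) (by rwa [hWu, hVu]) ?_
  rw [hWu, hVu]
  intro A' hAA' hA' a ha haA'
  exact hM.rkQ_insert_of_mem_F ((Finset.coe_subset.2 hRA).trans hAA') (hA'.trans hAFB) ha haA'

theorem subset_cl_filter (hM : M.IsMolecule R F T) (htl : M.Translative) (hRA : R ⊆ A)
    (hAT : A ⊆ R ∪ T) {W : Finset S} (hW : W ∈ M.centralOver ↑A) :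
    ↑W ⊆ M.cl (W.filter (orbOf G · ∈ (↑R : Set (E G S)))) := by
  obtain ⟨hWC, hWu⟩ := mem_centralOver.1 hW
  have hWR : W.filter (orbOf G · ∈ (↑R : Set (E G S))) ∈ M.C :=
    M.downClosed hWC (Finset.filter_subset _ W)
  intro x hx
  by_cases hxR : orbOf G x ∈ (↑R : Set (E G S))
  · exact M.mem_cl_of_mem hWR (Finset.mem_filter.2 ⟨hx, hxR⟩)
  have hxT : orbOf G x ∈ T :=
    (Finset.mem_union.1 (hAT (Finset.mem_coe.1 (hWu ▸ orbOf_mem_under hx)))).resolve_left hxR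
  have hxC : insert x (W.filter (orbOf G · ∈ (↑R : Set (E G S)))) ∈ M.C :=
    M.downClosed hWC (Finset.insert_subset hx (Finset.filter_subset _ W))
  refine ⟨hxC, ?_⟩
  rw [← htl.rkQ_under hxC, ← htl.rkQ_under hWR, under_insert, under_filter, hWu,
    Set.inter_eq_right.2 (Finset.coe_subset.2 hRA), hM.rkQ_insert_of_mem_T hxT]

theorem m_union (hM : M.IsMolecule R F T) (htl : M.Translative) (hnorm : M.Normal)
    (hRA : R ⊆ A) (hAT : A ⊆ R ∪ T) :
    M.m ↑(A ∪ F) = M.m ↑A * Nat.card (orbitRel.Quotient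
      (fixingSubgroup G (orbOf G ⁻¹' (↑R : Set (E G S)))) (transversals G (↑F : Set (E G S)))) := by
  rw [m_eq_card_orbitRel_quotient, m_eq_card_orbitRel_quotient, Finset.coe_union,
    htl.card_orbitRel_quotient_centralOver_union (Finset.disjoint_coe.2 (hM.disjoint_F hAT))
      fun W hW V hV => hM.union_mem_C htl hRA hAT hW hV]
  refine card_orbitRel_quotient_prod _ fun W => ?_
  obtain ⟨hWC, hWu⟩ := mem_centralOver.1 W.2
  rw [SubMulAction.stabilizer_of_subMul]
  exact stabilizer_eq_fixingSubgroup htl hnorm hWC (by rw [hWu]; exact Finset.coe_subset.2 hRA)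
    (hM.subset_cl_filter htl hRA hAT W.2)

end IsMolecule

end GSemimatroid

theorem almostArithmetic_molecule_multiplicative_general
    {G S : Type*} [Group G] [MulAction G S] [DecidableEq S]
    (M : GSemimatroid G S) (haa : M.AlmostArithmetic) :
    ∀ R F T : Finset (E G S),
      Disjoint R F → Disjoint R T → Disjoint F T →
      (↑(R ∪ F ∪ T) : Set (E G S)) ∈ M.CQ →
      (∀ A : Finset (E G S), R ⊆ A → A ⊆ R ∪ F ∪ T →
        M.rkQ ↑A = M.rkQ ↑R + (A ∩ F).card) →
      M.m ↑R * M.m ↑(R ∪ F ∪ T) = M.m ↑(R ∪ T) * M.m ↑(R ∪ F) := by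
  intro R F T hRF hRT hFT hCQ hrkQ
  have hM : M.IsMolecule R F T := ⟨hRF, hRT, hFT, hCQ, hrkQ⟩
  obtain ⟨htl, hnorm⟩ := haa
  rw [Finset.union_right_comm, hM.m_union htl hnorm Finset.subset_union_left subset_rfl,
    hM.m_union htl hnorm subset_rfl Finset.subset_union_left]
  ring

/-- For an almost-arithmetic cofinite `G`-semimatroid, the
multiplicity function is multiplicative on molecules:
`m(R)·m(R∪F∪T) = m(R∪T)·m(R∪F)`. -/
theorem almostArithmetic_molecule_multiplicative
    {G S : Type*} [Group G] [MulAction G S] [DecidableEq S]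
    (M : GSemimatroid G S) (hcof : M.Cofinite) (haa : M.AlmostArithmetic) :
    ∀ R F T : Finset (E G S),
      Disjoint R F → Disjoint R T → Disjoint F T →
      (↑(R ∪ F ∪ T) : Set (E G S)) ∈ M.CQ →
      (∀ A : Finset (E G S), R ⊆ A → A ⊆ R ∪ F ∪ T →
        M.rkQ ↑A = M.rkQ ↑R + (A ∩ F).card) →
      M.m ↑R * M.m ↑(R ∪ F ∪ T) = M.m ↑(R ∪ T) * M.m ↑(R ∪ F) :=
  almostArithmetic_molecule_multiplicative_general M haa
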